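/- Let d ≥ 5, let u be a vertex of the hypercube Q_d, and let M be a matching of Q_d. Assume Conjecture B holds for dimension d. Then there are at most two neighbors w of u in Q_d for which there does not exist a Hamilton path of Q_d between u and w extending M. -/

import Mathlib

open SimpleGraph

/-- The hypercube graph `Q_n` on binary strings of length `n`:
two strings are adjacent iff they differ in exactly one coordinate. -/
def Qc (n : ℕ) : SimpleGraph (Fin n → Bool) where
  Adj u v := (Finset.univ.filter fun i => u i ≠ v i).card = 1
  symm := by
    constructor
    intro u v h
    have hset : (Finset.univ.filter fun i => v i ≠ u i)
        = (Finset.univ.filter fun i => u i ≠ v i) :=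
      Finset.filter_congr (fun i _ => by simp [ne_comm])
    rw [hset]; exact h
  loopless := by
    constructor
    intro u h
    simp at h

/-- The parity (weight mod 2) of a vertex of the hypercube. -/
def wt {n : ℕ} (u : Fin n → Bool) : ZMod 2 :=
  ((Finset.univ.filter fun i => u i = true).card : ZMod 2)

/-- The neighbor of `u` obtained by flipping coordinate `i`. -/
def flipCoord {n : ℕ} (u : Fin n → Bool) (i : Fin n) : Fin n → Bool :=
  Function.update u i (!u i)

/-- `M` is a matching of the graph `G`: a set of pairwise non-incident edges of `G`. -/
def IsMatchingOn {V : Type*} (G : SimpleGraph V) (M : Set (Sym2 V)) : Prop :=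
  M ⊆ G.edgeSet ∧ ∀ e ∈ M, ∀ f ∈ M, e ≠ f → ∀ v : V, v ∈ e → v ∉ f

/-- A vertex is covered by a set of edges if it is an endpoint of one of them. -/
def coveredBy {V : Type*} (M : Set (Sym2 V)) (v : V) : Prop :=
  ∃ e ∈ M, v ∈ e

/-- There is a Hamilton path of `G` between `u` and `v` whose edge set contains `M`. -/
def ExtendsHamPath {V : Type*} [DecidableEq V] (G : SimpleGraph V) (M : Set (Sym2 V)) (u v : V) : Prop :=
  ∃ p : G.Walk u v, p.IsHamiltonian ∧ ∀ e ∈ M, e ∈ p.edges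

/-- There is a Hamilton cycle of `G` whose edge set contains `M`. -/
def ExtendsHamCycle {V : Type*} [DecidableEq V] (G : SimpleGraph V) (M : Set (Sym2 V)) : Prop :=
  ∃ (a : V) (c : G.Walk a a), c.IsHamiltonianCycle ∧ ∀ e ∈ M, e ∈ c.edges

/-- The set of directions (coordinates where the endpoints differ) of an edge. -/
def edgeDirs {n : ℕ} (e : Sym2 (Fin n → Bool)) : Finset (Fin n) :=
  Sym2.lift ⟨fun u v => Finset.univ.filter fun i => u i ≠ v i, fun u v =>
    Finset.filter_congr (fun i _ => by simp [ne_comm])⟩ e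

/-- The edges of `M` lie in at most `d` distinct directions. -/
def SpansAtMost {n : ℕ} (M : Set (Sym2 (Fin n → Bool))) (d : ℕ) : Prop :=
  ∃ D : Finset (Fin n), D.card ≤ d ∧ ∀ e ∈ M, edgeDirs e ⊆ D

/-- The half-layer in direction `i` of parity `p`: all edges of `Q_n` in direction `i`
whose base (the endpoint with `i`-th coordinate `false`) has parity `p`. -/
def halfLayer (n : ℕ) (i : Fin n) (p : ZMod 2) : Set (Sym2 (Fin n → Bool)) :=
  {e | ∃ u : Fin n → Bool, u i = false ∧ wt u = p ∧ e = s(u, flipCoord u i)}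

/-- Condition C1: `M` contains a half-layer covering both `u` and `v`. -/
def CondC1 {n : ℕ} (M : Set (Sym2 (Fin n → Bool))) (u v : Fin n → Bool) : Prop :=
  ∃ (i : Fin n) (p : ZMod 2), halfLayer n i p ⊆ M ∧
    coveredBy (halfLayer n i p) u ∧ coveredBy (halfLayer n i p) v

/-- Condition C2: `v = u^i`, `M` contains a `u`-avoiding almost half-layer in direction `i`,
and there is `j ≠ i` with `u u^j ∈ M` and `v v^j ∈ M`. -/
def CondC2 {n : ℕ} (M : Set (Sym2 (Fin n → Bool))) (u v : Fin n → Bool) : Prop :=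
  ∃ i : Fin n, v = flipCoord u i ∧
    (∃ (p : ZMod 2) (e₀ : Sym2 (Fin n → Bool)), e₀ ∈ halfLayer n i p ∧ u ∈ e₀ ∧
      halfLayer n i p \ {e₀} ⊆ M) ∧
    ∃ j : Fin n, j ≠ i ∧ s(u, flipCoord u j) ∈ M ∧ s(v, flipCoord v j) ∈ M

/-- Condition C3: `uv ∈ M`. -/
def CondC3 {n : ℕ} (M : Set (Sym2 (Fin n → Bool))) (u v : Fin n → Bool) : Prop :=
  s(u, v) ∈ M

/-- None of the C-conditions holds for `M`, `u`, `v`. -/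
def NoneC {n : ℕ} (M : Set (Sym2 (Fin n → Bool))) (u v : Fin n → Bool) : Prop :=
  ¬ CondC1 M u v ∧ ¬ CondC2 M u v ∧ ¬ CondC3 M u v

/-- Conjecture A for dimension `d`: for every matching `M` of `Q_d` and vertices `u`, `v`
of opposite parity with `u` not covered by `M`, there is a Hamilton path between `u` and `v`
extending `M`. -/
def ConjA (d : ℕ) : Prop :=
  ∀ M : Set (Sym2 (Fin d → Bool)), IsMatchingOn (Qc d) M →
    ∀ u v : Fin d → Bool, wt u ≠ wt v → ¬ coveredBy M u →
      ExtendsHamPath (Qc d) M u v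

/-- Conjecture B for dimension `d`: for every matching `M` of `Q_d` and vertices `u`, `v`
of opposite parity, a Hamilton path between `u` and `v` extending `M` exists iff none of
the C-conditions holds. -/
def ConjB (d : ℕ) : Prop :=
  ∀ M : Set (Sym2 (Fin d → Bool)), IsMatchingOn (Qc d) M →
    ∀ u v : Fin d → Bool, wt u ≠ wt v →
      (ExtendsHamPath (Qc d) M u v ↔ NoneC M u v)

/-- There exist at least two distinct Hamilton paths of `G` between `u` and `v`
extending `M`. -/
def TwoHamPaths {V : Type*} [DecidableEq V] (G : SimpleGraph V) (M : Set (Sym2 V)) (u v : V) : Prop :=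
  ∃ p₁ p₂ : G.Walk u v, p₁.IsHamiltonian ∧ (∀ e ∈ M, e ∈ p₁.edges) ∧
    p₂.IsHamiltonian ∧ (∀ e ∈ M, e ∈ p₂.edges) ∧ p₁ ≠ p₂

/-- Conjecture C for dimension `d`: none of the C-conditions holds iff there exist two
distinct Hamilton paths between `u` and `v` extending `M`. -/
def ConjC (d : ℕ) : Prop :=
  ∀ M : Set (Sym2 (Fin d → Bool)), IsMatchingOn (Qc d) M →
    ∀ u v : Fin d → Bool, wt u ≠ wt v →
      (NoneC M u v ↔ TwoHamPaths (Qc d) M u v)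

/-- The copy of a set of edges of `Q_d` inside the `i`-th canonical copy of `Q_d`
in `P_m □ Q_d`. -/
def liftEdges {m d : ℕ} (i : Fin m) (M : Set (Sym2 (Fin d → Bool))) :
    Set (Sym2 (Fin m × (Fin d → Bool))) :=
  (Sym2.map fun x => (i, x)) '' M

/-- The global parity of a vertex of `P_m □ Q_d`. -/
def gwt {m d : ℕ} (v : Fin m × (Fin d → Bool)) : ZMod 2 :=
  (v.1.val : ZMod 2) + wt v.2

/-- The sequence of half-layers of `P_m □ Q_d` in direction `k` of global parity `p`:
all edges of the canonical copies lying in direction `k` whose base has global parity `p`. -/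
def seqHalfLayer (m d : ℕ) (k : Fin d) (p : ZMod 2) :
    Set (Sym2 (Fin m × (Fin d → Bool))) :=
  {e | ∃ (i : Fin m) (x : Fin d → Bool), x k = false ∧ gwt (i, x) = p ∧
    e = s((i, x), (i, flipCoord x k))}

/-- `M` is a maximal matching of `G`. -/
def IsMaximalMatchingOn {V : Type*} (G : SimpleGraph V) (M : Set (Sym2 V)) : Prop :=
  IsMatchingOn G M ∧ ∀ e : Sym2 V, IsMatchingOn G (insert e M) → e ∈ M

/-- The set `(M \ {uu^M, vv^M}) ∪ {u^M v^M}`, where the removed edges are those of `M`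
incident to `u` or `v`, and the edge `u^M v^M` is present exactly when both `u` and `v`
are covered by `M`. -/
def reducedM {n : ℕ} (M : Set (Sym2 (Fin n → Bool))) (u v : Fin n → Bool) :
    Set (Sym2 (Fin n → Bool)) :=
  {e | e ∈ M ∧ u ∉ e ∧ v ∉ e} ∪
    {f | ∃ a b : Fin n → Bool, s(u, a) ∈ M ∧ s(v, b) ∈ M ∧ f = s(a, b)}

/-- The complete bipartite graph `B(Q_n)` on the vertices of `Q_n`: two vertices are
adjacent iff they have opposite parity. -/
def Bgraph (n : ℕ) : SimpleGraph (Fin n → Bool) where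
  Adj u v := wt u ≠ wt v
  symm := ⟨fun _ _ h => h.symm⟩
  loopless := ⟨fun _ h => h rfl⟩

/-! By Conjecture B, a neighbour `u^k` of `u` with no Hamilton path to `u` extending `M` satisfies
a C-condition. C1 and C3 both force `u u^k ∈ M`, which happens for at most one `k` since `M` is a
matching. C2 forces a `u`-avoiding almost half-layer in direction `k` inside `M`. Two such layers in
distinct directions `i, i'` would both cover some vertex `z` that differs from `u` outside
`{i, i'}`, so `z` would lie on two `M`-edges, in directions `i` and `i'`. -/

lemma zmod_two_add_one_eq_of_ne {a b : ZMod 2} (h : a ≠ b) : a + 1 = b := by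
  revert a b; decide

section Hypercube

variable {n : ℕ}

lemma flipCoord_apply_self (u : Fin n → Bool) (i : Fin n) : flipCoord u i i = !u i := by
  simp [flipCoord]

lemma flipCoord_apply_of_ne (u : Fin n → Bool) {i j : Fin n} (h : j ≠ i) :
    flipCoord u i j = u j :=
  Function.update_of_ne h _ _

lemma flipCoord_flipCoord (u : Fin n → Bool) (i : Fin n) : flipCoord (flipCoord u i) i = u := by
  funext j
  by_cases h : j = i
  · subst h; simp [flipCoord_apply_self]
  · simp [flipCoord_apply_of_ne _ h]

lemma flipCoord_injective (u : Fin n → Bool) : Function.Injective (flipCoord u) := by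
  intro i i' h
  by_contra hii
  have := congrFun h i
  rw [flipCoord_apply_self, flipCoord_apply_of_ne u hii] at this
  exact Bool.not_ne_self _ this

lemma wt_flipCoord (u : Fin n → Bool) (k : Fin n) : wt (flipCoord u k) = wt u + 1 := by
  simp only [wt, Finset.card_filter, ← Finset.add_sum_erase _ _ (Finset.mem_univ k),
    flipCoord_apply_self]
  rw [Finset.sum_congr rfl fun j hj => by rw [flipCoord_apply_of_ne u (Finset.ne_of_mem_erase hj)]]
  cases u k <;> simp [add_comm, ← add_assoc, CharTwo.add_self_eq_zero]

lemma exists_eq_flipCoord_of_adj {u w : Fin n → Bool} (h : (Qc n).Adj u w) :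
    ∃ k, w = flipCoord u k := by
  obtain ⟨k, hk⟩ := Finset.card_eq_one.mp h
  have hdiff : ∀ j, u j ≠ w j ↔ j = k := fun j => by
    simpa using Finset.ext_iff.mp hk j
  refine ⟨k, funext fun j => ?_⟩
  by_cases hj : j = k
  · rw [hj, flipCoord_apply_self]
    have hk := (hdiff k).2 rfl
    revert hk; cases u k <;> cases w k <;> simp
  · rw [flipCoord_apply_of_ne u hj]
    exact (not_not.mp (mt (hdiff j).1 hj)).symm

lemma exists_agree_wt_eq (x : Fin n → Bool) (l : Fin n) (p : ZMod 2) :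
    ∃ z : Fin n → Bool, (∀ j ≠ l, z j = x j) ∧ wt z = p := by
  by_cases hx : wt x = p
  · exact ⟨x, fun _ _ => rfl, hx⟩
  · refine ⟨flipCoord x l, fun j hj => flipCoord_apply_of_ne x hj, ?_⟩
    rw [wt_flipCoord, zmod_two_add_one_eq_of_ne hx]

end Hypercube

lemma IsMatchingOn.eq_of_mk_mem {V : Type*} {G : SimpleGraph V} {M : Set (Sym2 V)}
    (hM : IsMatchingOn G M) {u a b : V} (ha : s(u, a) ∈ M) (hb : s(u, b) ∈ M) : a = b := by
  by_cases h : s(u, a) = s(u, b)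
  · exact Sym2.congr_right.mp h
  · exact absurd (Sym2.mem_mk_left u b) (hM.2 _ ha _ hb h u (Sym2.mem_mk_left u a))

lemma IsMatchingOn.subsingleton_partners {V : Type*} {G : SimpleGraph V} {M : Set (Sym2 V)}
    (hM : IsMatchingOn G M) (u : V) : {w | s(u, w) ∈ M}.Subsingleton :=
  fun _ ha _ hb => hM.eq_of_mk_mem ha hb

section HalfLayer

variable {n : ℕ} {i : Fin n} {p : ZMod 2}

lemma eq_mk_flipCoord_of_mem_halfLayer {e : Sym2 (Fin n → Bool)} (he : e ∈ halfLayer n i p)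
    {z : Fin n → Bool} (hz : z ∈ e) : e = s(z, flipCoord z i) := by
  obtain ⟨b, -, -, rfl⟩ := he
  rcases Sym2.mem_iff.mp hz with rfl | rfl
  · rfl
  · rw [flipCoord_flipCoord, Sym2.eq_swap]

lemma coveredBy_halfLayer_iff {z : Fin n → Bool} :
    coveredBy (halfLayer n i p) z ↔ wt z = if z i then p + 1 else p := by
  constructor
  · rintro ⟨e, ⟨b, hbi, hbw, rfl⟩, hz⟩
    rcases Sym2.mem_iff.mp hz with rfl | rfl
    · simp [hbi, hbw]
    · simp [flipCoord_apply_self, hbi, wt_flipCoord, hbw]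
  · intro hz
    cases hzi : z i
    · exact ⟨_, ⟨z, hzi, by simpa [hzi] using hz, rfl⟩, Sym2.mem_mk_left _ _⟩
    · refine ⟨_, ⟨flipCoord z i, by simp [flipCoord_apply_self, hzi], ?_, rfl⟩, ?_⟩
      · simp [wt_flipCoord, hz, hzi, add_assoc, CharTwo.add_self_eq_zero]
      · simp [flipCoord_flipCoord]

lemma mk_flipCoord_mem_halfLayer {z : Fin n → Bool} (hz : coveredBy (halfLayer n i p) z) :
    s(z, flipCoord z i) ∈ halfLayer n i p := by
  obtain ⟨e, he, hze⟩ := hz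
  rwa [← eq_mk_flipCoord_of_mem_halfLayer he hze]

lemma notMem_of_mem_halfLayer {e : Sym2 (Fin n → Bool)} (he : e ∈ halfLayer n i p)
    {u z : Fin n → Bool} (hu : u ∈ e) {k : Fin n} (hki : k ≠ i) (hzk : z k ≠ u k) : z ∉ e := by
  rw [eq_mk_flipCoord_of_mem_halfLayer he hu]
  rintro hz
  rcases Sym2.mem_iff.mp hz with rfl | rfl
  · exact hzk rfl
  · exact hzk (flipCoord_apply_of_ne u hki)

lemma mk_flipCoord_mem_of_diff_subset {M : Set (Sym2 (Fin n → Bool))} {e₀ : Sym2 (Fin n → Bool)}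
    (hsub : halfLayer n i p \ {e₀} ⊆ M) {z : Fin n → Bool} (hz : coveredBy (halfLayer n i p) z)
    (hze : z ∉ e₀) : s(z, flipCoord z i) ∈ M :=
  hsub ⟨mk_flipCoord_mem_halfLayer hz, fun h => hze (h ▸ Sym2.mem_mk_left _ _)⟩

lemma exists_coveredBy_halfLayer_inter {i' k l : Fin n} (hii' : i ≠ i') (hki : k ≠ i)
    (hki' : k ≠ i') (hli : l ≠ i) (hli' : l ≠ i') (hlk : l ≠ k) (p' : ZMod 2) (b : Bool) :
    ∃ z, coveredBy (halfLayer n i p) z ∧ coveredBy (halfLayer n i' p') z ∧ z k = b := by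
  obtain ⟨y, hy, hwt⟩ := exists_agree_wt_eq (fun j => if j = k then b else false) l p'
  have hyi : y i = false := by simp [hy i hli.symm, hki.symm]
  have hyi' : y i' = false := by simp [hy i' hli'.symm, hki'.symm]
  have hyk : y k = b := by simp [hy k hlk.symm]
  simp only [coveredBy_halfLayer_iff]
  by_cases hpp : p = p'
  · exact ⟨y, by simp [hyi, hwt, hpp], by simp [hyi', hwt], hyk⟩
  · refine ⟨flipCoord y i', ?_, ?_, ?_⟩
    · simp [flipCoord_apply_of_ne y hii', hyi, wt_flipCoord, hwt,
        zmod_two_add_one_eq_of_ne (Ne.symm hpp)]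
    · simp [flipCoord_apply_self, hyi', wt_flipCoord, hwt]
    · rw [flipCoord_apply_of_ne y hki', hyk]

end HalfLayer

def ContainsAvoidingAlmostHalfLayer {n : ℕ} (M : Set (Sym2 (Fin n → Bool))) (u : Fin n → Bool)
    (i : Fin n) : Prop :=
  ∃ (p : ZMod 2) (e₀ : Sym2 (Fin n → Bool)), e₀ ∈ halfLayer n i p ∧ u ∈ e₀ ∧
    halfLayer n i p \ {e₀} ⊆ M

lemma setOf_containsAvoidingAlmostHalfLayer_subsingleton {n : ℕ} (hn : 4 ≤ n)
    {M : Set (Sym2 (Fin n → Bool))} (hM : IsMatchingOn (Qc n) M) (u : Fin n → Bool) :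
    {i | ContainsAvoidingAlmostHalfLayer M u i}.Subsingleton := by
  rintro i ⟨p, e₀, he₀, hue₀, hsub⟩ i' ⟨p', e₀', he₀', hue₀', hsub'⟩
  by_contra hii'
  obtain ⟨k, -, hk⟩ := Finset.exists_mem_notMem_of_card_lt_card (s := {i, i'})
    (t := Finset.univ) ((Finset.card_le_two).trans_lt (by simp; omega))
  obtain ⟨l, -, hl⟩ := Finset.exists_mem_notMem_of_card_lt_card (s := {i, i', k})
    (t := Finset.univ) ((Finset.card_le_three).trans_lt (by simp; omega))
  simp only [Finset.mem_insert, Finset.mem_singleton, not_or] at hk hl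
  obtain ⟨z, hz, hz', hzk⟩ := exists_coveredBy_halfLayer_inter hii' hk.1 hk.2 hl.1 hl.2.1 hl.2.2
    p' (!u k) (p := p)
  have hzuk : z k ≠ u k := by simp [hzk]
  have hzi := mk_flipCoord_mem_of_diff_subset hsub hz (notMem_of_mem_halfLayer he₀ hue₀ hk.1 hzuk)
  have hzi' :=
    mk_flipCoord_mem_of_diff_subset hsub' hz' (notMem_of_mem_halfLayer he₀' hue₀' hk.2 hzuk)
  exact hii' (flipCoord_injective z (hM.eq_of_mk_mem hzi hzi'))

lemma CondC1.mk_flipCoord_mem {n : ℕ} {M : Set (Sym2 (Fin n → Bool))} {u : Fin n → Bool}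
    {k : Fin n} (h : CondC1 M u (flipCoord u k)) : s(u, flipCoord u k) ∈ M := by
  obtain ⟨i, p, hsub, hu, hw⟩ := h
  -- `u` and `u^k` have opposite parities, so a half-layer covering both has direction `k`.
  obtain rfl : i = k := by
    by_contra hik
    rw [coveredBy_halfLayer_iff] at hu hw
    rw [flipCoord_apply_of_ne u hik, wt_flipCoord, ← hu] at hw
    simp at hw
  exact hsub (mk_flipCoord_mem_halfLayer hu)

/-- For `d ≥ 5`, a vertex `u` of `Q_d` and a matching `M` of `Q_d`, assuming Conjecture B
for dimension `d`, at most two neighbors of `u` admit no Hamilton path to `u`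
extending `M`. -/
theorem stmt5 (d : ℕ) (hd : 5 ≤ d) (u : Fin d → Bool)
    (M : Set (Sym2 (Fin d → Bool))) (hM : IsMatchingOn (Qc d) M) (hB : ConjB d) :
    {w | (Qc d).Adj u w ∧ ¬ ExtendsHamPath (Qc d) M u w}.ncard ≤ 2 := by
  have hbad : {w | (Qc d).Adj u w ∧ ¬ ExtendsHamPath (Qc d) M u w} ⊆
      {w | s(u, w) ∈ M} ∪ flipCoord u '' {i | ContainsAvoidingAlmostHalfLayer M u i} := by
    rintro _ ⟨hadj, hno⟩
    obtain ⟨k, rfl⟩ := exists_eq_flipCoord_of_adj hadj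
    have hparity : wt u ≠ wt (flipCoord u k) := by simp [wt_flipCoord]
    have hC : CondC1 M u (flipCoord u k) ∨ CondC2 M u (flipCoord u k) ∨
        CondC3 M u (flipCoord u k) := by
      have := mt (hB M hM u _ hparity).2 hno
      unfold NoneC at this
      tauto
    rcases hC with hC1 | ⟨i, hki, hi, -⟩ | hC3
    · exact Or.inl hC1.mk_flipCoord_mem
    · exact Or.inr ⟨i, hi, hki.symm⟩
    · exact Or.inl hC3
  have hpartner := Set.ncard_le_one_iff_subsingleton.2 (hM.subsingleton_partners u)
  have hlayer := Set.ncard_le_one_iff_subsingleton.2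
    ((setOf_containsAvoidingAlmostHalfLayer_subsingleton (by omega) hM u).image (flipCoord u))
  calc _ ≤ _ := Set.ncard_le_ncard hbad
    _ ≤ _ := Set.ncard_union_le _ _
    _ ≤ 2 := by omega
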